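/- arXiv:2004.07912 — 2 statements merged into one kernel-verified Lean document; each statement's English description precedes it below -/
import Mathlib

section
/- Let d₁ and d₂ be bounded metrics on a set S, and suppose a sequence of finite covers {X^n} of S is a quasi-visual approximation of both (S,d₁) and (S,d₂). Then the identity map id : (S,d₁) → (S,d₂) is a quasisymmetric homeomorphism; moreover it can be taken to be a power quasisymmetry, i.e., with distortion function η(t) = K·max{t^α, t^{1/α}} for some K ≥ 1 and α ∈ (0,1]. -/
/-!
For a quasi-visual approximation, the distance of `x ≠ y` is comparable to the diameter of the
tile of `x` at the last level where the tiles of `x` and `y` meet, and along the tiles of a fixed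
point the diameters shrink and grow at most geometrically in the level. So `d₁(x,y) ≤ t d₁(x,z)`
bounds the level of `(x,y)` from below by that of `(x,z)` up to `O(|log t|)`, and the geometric
bounds for `d₂` turn this back into `d₂(x,y) ≲ t^β d₂(x,z)`, with `β` a ratio of the logarithms
of the decay and growth rates of the two metrics.
-/

open Set Metric

variable {S : Type*}

/-- The distance of `x` and `y` with respect to the metric `m` on `S`. -/
noncomputable def mdist (m : MetricSpace S) (x y : S) : ℝ :=
  letI := m; dist x y

/-- The diameter of `A ⊆ S` with respect to the metric `m` on `S`. -/
noncomputable def mdiam (m : MetricSpace S) (A : Set S) : ℝ :=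
  letI := m; Metric.diam A

/-- `(S, m)` is a bounded metric space. -/
def mBounded (m : MetricSpace S) : Prop :=
  letI := m; Bornology.IsBounded (Set.univ : Set S)

/-- A distortion function: a homeomorphism `η : [0,∞) → [0,∞)`. -/
def IsGauge (η : ℝ → ℝ) : Prop :=
  η 0 = 0 ∧ StrictMonoOn η (Set.Ici 0) ∧ ContinuousOn η (Set.Ici 0) ∧
    ∀ s : ℝ, 0 ≤ s → ∃ t : ℝ, 0 ≤ t ∧ η t = s

/-- `𝒳` is a quasi-visual approximation of `S` with respect to the metric `m`. -/
def IsQVAWith (m : MetricSpace S) (𝒳 : ℕ → Set (Set S)) : Prop :=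
  (∀ n, (𝒳 n).Finite) ∧
  (∀ n, ⋃₀ 𝒳 n = Set.univ) ∧
  (𝒳 0 = {Set.univ}) ∧
  (∃ C₁ : ℝ, 1 ≤ C₁ ∧ ∀ n, ∀ X ∈ 𝒳 n, ∀ Y ∈ 𝒳 n, (X ∩ Y).Nonempty →
    mdiam m X ≤ C₁ * mdiam m Y) ∧
  (∃ c₂ : ℝ, 0 < c₂ ∧ ∀ n, ∀ X ∈ 𝒳 n, ∀ Y ∈ 𝒳 n, X ∩ Y = ∅ →
    ∀ x ∈ X, ∀ y ∈ Y, c₂ * mdiam m X ≤ mdist m x y) ∧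
  (∃ C₃ : ℝ, 1 ≤ C₃ ∧ ∀ n, ∀ X ∈ 𝒳 n, ∀ Y ∈ 𝒳 (n + 1), (X ∩ Y).Nonempty →
    mdiam m X ≤ C₃ * mdiam m Y ∧ mdiam m Y ≤ C₃ * mdiam m X) ∧
  (∃ k₀ : ℕ, 0 < k₀ ∧ ∃ lam : ℝ, 0 < lam ∧ lam < 1 ∧
    ∀ n, ∀ X ∈ 𝒳 n, ∀ Y ∈ 𝒳 (n + k₀), (X ∩ Y).Nonempty →
    mdiam m Y ≤ lam * mdiam m X)

open Filter Topology

lemma mdist_self (m : MetricSpace S) (x : S) : mdist m x x = 0 :=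
  @dist_self S m.toPseudoMetricSpace x

lemma mdist_pos (m : MetricSpace S) {x y : S} : 0 < mdist m x y ↔ x ≠ y := @dist_pos S m x y

lemma mdist_nonneg (m : MetricSpace S) (x y : S) : 0 ≤ mdist m x y :=
  @dist_nonneg S m.toPseudoMetricSpace x y

lemma mdiam_nonneg (m : MetricSpace S) (A : Set S) : 0 ≤ mdiam m A :=
  @diam_nonneg S A m.toPseudoMetricSpace

noncomputable def powerDistortion (α t : ℝ) : ℝ := max (t ^ α) (t ^ α⁻¹)

lemma powerDistortion_nonneg (α : ℝ) {t : ℝ} (ht : 0 ≤ t) : 0 ≤ powerDistortion α t :=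
  le_max_of_le_left (Real.rpow_nonneg ht α)

lemma rpow_le_powerDistortion {α β t : ℝ} (hα : 0 < α) (hαβ : α ≤ β) (hβα : α ≤ β⁻¹)
    (ht : 0 < t) : t ^ β ≤ powerDistortion α t := by
  have hβα' : β ≤ α⁻¹ := le_inv_of_le_inv₀ hα hβα
  rcases le_total t 1 with h | h
  · exact le_max_of_le_left (Real.rpow_le_rpow_of_exponent_ge ht h hαβ)
  · exact le_max_of_le_right (Real.rpow_le_rpow_of_exponent_le h hβα')

lemma powerDistortion_mul_le {α s t : ℝ} (hs : 0 ≤ s) (ht : 0 ≤ t) :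
    powerDistortion α (s * t) ≤ powerDistortion α s * powerDistortion α t := by
  unfold powerDistortion
  rw [Real.mul_rpow hs ht, Real.mul_rpow hs ht]
  apply max_le <;> gcongr <;> first | positivity | exact le_max_left _ _ | exact le_max_right _ _

lemma pow_le_rpow_logb_of_pow_le {b c s : ℝ} (hb : 0 < b) (hb₁ : b ≠ 1) (hc : 0 < c)
    (hβ : 0 ≤ Real.logb b c) {k : ℕ} (h : b ^ k ≤ s) : c ^ k ≤ s ^ Real.logb b c := by
  calc c ^ k = (b ^ k) ^ Real.logb b c := by
        rw [← Real.rpow_natCast, ← Real.rpow_natCast, ← Real.rpow_mul hb.le, mul_comm,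
          Real.rpow_mul hb.le, Real.rpow_logb hb hb₁ hc]
    _ ≤ s ^ Real.logb b c := by gcongr

def HasGeometricBounds (M ρ G : ℝ) (u : ℕ → ℝ) : Prop :=
  ∀ n k, u (n + k) ≤ M * ρ ^ k * u n ∧ u n ≤ G ^ k * u (n + k)

lemma apply_add_mul_le_pow_mul {u : ℕ → ℝ} {C : ℝ} {s : ℕ} (hC : 0 ≤ C)
    (h : ∀ n, u (n + s) ≤ C * u n) (n k : ℕ) : u (n + s * k) ≤ C ^ k * u n := by
  induction k with
  | zero => simp
  | succ k ih =>
    calc u (n + s * (k + 1)) = u (n + s * k + s) := by ring_nf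
      _ ≤ C * u (n + s * k) := h _
      _ ≤ C * (C ^ k * u n) := by gcongr
      _ = C ^ (k + 1) * u n := by ring

lemma le_pow_mul_apply_add {u : ℕ → ℝ} {C : ℝ} (hC : 0 ≤ C)
    (h : ∀ n, u n ≤ C * u (n + 1)) (n k : ℕ) : u n ≤ C ^ k * u (n + k) := by
  induction k with
  | zero => simp
  | succ k ih =>
    calc u n ≤ C ^ k * u (n + k) := ih
      _ ≤ C ^ k * (C * u (n + k + 1)) := by gcongr; exact h _
      _ = C ^ (k + 1) * u (n + (k + 1)) := by ring_nf

lemma hasGeometricBounds_of_one_step {u : ℕ → ℝ} {C lam : ℝ} {k₀ : ℕ} (hu : ∀ n, 0 ≤ u n)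
    (hC : 1 ≤ C) (hk₀ : k₀ ≠ 0) (hlam : 0 < lam) (hlam₁ : lam < 1)
    (hsucc : ∀ n, u (n + 1) ≤ C * u n) (hpred : ∀ n, u n ≤ C * u (n + 1))
    (hdecay : ∀ n, u (n + k₀) ≤ lam * u n) :
    HasGeometricBounds (C ^ k₀ / lam) (lam ^ (k₀⁻¹ : ℝ)) C u := by
  set ρ : ℝ := lam ^ (k₀⁻¹ : ℝ)
  have hρ₀ : 0 ≤ ρ := by positivity
  have hρ₁ : ρ ≤ 1 := Real.rpow_le_one hlam.le hlam₁.le (by positivity)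
  refine fun n k => ⟨?_, le_pow_mul_apply_add (by positivity) hpred n k⟩
  obtain ⟨q, r, hr, rfl⟩ : ∃ q r, r < k₀ ∧ k₀ * q + r = k :=
    ⟨k / k₀, k % k₀, Nat.mod_lt _ (Nat.pos_of_ne_zero hk₀), Nat.div_add_mod k k₀⟩
  have hlam_pow : lam ^ q ≤ ρ ^ (k₀ * q + r) / lam := by
    have hρk₀ : ρ ^ k₀ = lam := Real.rpow_inv_natCast_pow hlam.le hk₀
    rw [le_div_iff₀ hlam]
    calc lam ^ q * lam = ρ ^ (k₀ * q) * ρ ^ k₀ := by rw [pow_mul, hρk₀]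
      _ ≤ ρ ^ (k₀ * q) * ρ ^ r :=
          mul_le_mul_of_nonneg_left (pow_le_pow_of_le_one hρ₀ hρ₁ hr.le) (by positivity)
      _ = ρ ^ (k₀ * q + r) := by rw [pow_add]
  have hun := hu n
  calc u (n + (k₀ * q + r)) = u (n + k₀ * q + 1 * r) := by ring_nf
    _ ≤ C ^ r * u (n + k₀ * q) :=
        apply_add_mul_le_pow_mul (by positivity) hsucc _ r
    _ ≤ C ^ k₀ * (lam ^ q * u n) :=
        mul_le_mul (pow_le_pow_right₀ hC hr.le)
          (apply_add_mul_le_pow_mul hlam.le hdecay n q) (hu _) (by positivity)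
    _ ≤ C ^ k₀ * (ρ ^ (k₀ * q + r) / lam * u n) := by gcongr
    _ = C ^ k₀ / lam * ρ ^ (k₀ * q + r) * u n := by ring

namespace HasGeometricBounds

variable {M ρ G M' ρ' G' : ℝ} {u v : ℕ → ℝ} {p q : ℕ} {t : ℝ}

lemma le_rpow_mul_of_le (hu : HasGeometricBounds M ρ G u)
    (hv : HasGeometricBounds M' ρ' G' v) (hG : 1 < G) (hρ' : 0 < ρ') (hρ'₁ : ρ' < 1)
    (hM' : 0 ≤ M') (hvp : 0 ≤ v p) (ht : 0 < t) (huq : 0 < u q) (hle : u q ≤ t * u p)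
    (hpq : p ≤ q) :
    v q ≤ M' * t ^ Real.logb G⁻¹ ρ' * v p := by
  obtain ⟨k, rfl⟩ := Nat.exists_eq_add_of_le hpq
  have hGk : G⁻¹ ^ k ≤ t := by
    have : 1 * u (p + k) ≤ (t * G ^ k) * u (p + k) := by
      nlinarith [mul_le_mul_of_nonneg_left (hu p k).2 ht.le]
    rw [inv_pow, inv_le_iff_one_le_mul₀ (by positivity)]
    exact le_of_mul_le_mul_right this huq
  have hβ : 0 ≤ Real.logb G⁻¹ ρ' :=
    (Real.logb_pos_of_base_lt_one (by positivity) (inv_lt_one_of_one_lt₀ hG) hρ' hρ'₁).le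
  calc v (p + k) ≤ M' * ρ' ^ k * v p := (hv p k).1
    _ ≤ M' * t ^ Real.logb G⁻¹ ρ' * v p := by
        gcongr
        exact pow_le_rpow_logb_of_pow_le (by positivity) (inv_lt_one_of_one_lt₀ hG).ne hρ' hβ hGk

lemma le_rpow_mul_of_ge (hu : HasGeometricBounds M ρ G u)
    (hv : HasGeometricBounds M' ρ' G' v) (hM : 0 < M) (hρ : 0 < ρ) (hρ₁ : ρ < 1) (hG' : 1 < G')
    (hvp : 0 ≤ v p) (ht : 0 < t) (huq : 0 < u q) (hle : u q ≤ t * u p) (hqp : q ≤ p) :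
    v q ≤ M ^ Real.logb ρ⁻¹ G' * t ^ Real.logb ρ⁻¹ G' * v p := by
  obtain ⟨k, rfl⟩ := Nat.exists_eq_add_of_le hqp
  have hρk : ρ⁻¹ ^ k ≤ M * t := by
    have : 1 * u q ≤ (M * t * ρ ^ k) * u q := by
      nlinarith [mul_le_mul_of_nonneg_left (hu q k).1 ht.le]
    rw [inv_pow, inv_le_iff_one_le_mul₀ (by positivity)]
    exact le_of_mul_le_mul_right this huq
  have hρ_inv : 1 < ρ⁻¹ := (one_lt_inv₀ hρ).2 hρ₁
  calc v q ≤ G' ^ k * v (q + k) := (hv q k).2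
    _ ≤ (M * t) ^ Real.logb ρ⁻¹ G' * v (q + k) := by
        gcongr
        exact pow_le_rpow_logb_of_pow_le (by positivity) hρ_inv.ne' (by positivity)
          (Real.logb_pos hρ_inv hG').le hρk
    _ = M ^ Real.logb ρ⁻¹ G' * t ^ Real.logb ρ⁻¹ G' * v (q + k) := by
        rw [Real.mul_rpow hM.le ht.le]

end HasGeometricBounds

lemma min_inv_le_one (β : ℝ) : min β β⁻¹ ≤ 1 := by
  rcases le_total β 1 with h | h
  · exact min_le_of_left_le h
  · exact min_le_of_right_le (inv_le_one_of_one_le₀ h)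

theorem exists_powerDistortion_comparison {M ρ G M' ρ' G' : ℝ} (hM : 0 < M) (hρ : 0 < ρ)
    (hρ₁ : ρ < 1) (hG : 1 < G) (hM' : 0 ≤ M') (hρ' : 0 < ρ') (hρ'₁ : ρ' < 1) (hG' : 1 < G') :
    ∃ K, 1 ≤ K ∧ ∃ α, 0 < α ∧ α ≤ 1 ∧ ∀ u v : ℕ → ℝ, HasGeometricBounds M ρ G u →
      HasGeometricBounds M' ρ' G' v → (∀ n, 0 ≤ v n) → ∀ p q t, 0 < t → 0 < u q →
        u q ≤ t * u p → v q ≤ K * powerDistortion α t * v p := by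
  set β₁ := Real.logb G⁻¹ ρ'
  set β₂ := Real.logb ρ⁻¹ G'
  have hβ₁ : 0 < β₁ :=
    Real.logb_pos_of_base_lt_one (by positivity) (inv_lt_one_of_one_lt₀ hG) hρ' hρ'₁
  have hβ₂ : 0 < β₂ := Real.logb_pos ((one_lt_inv₀ hρ).2 hρ₁) hG'
  set K := max 1 (max M' (M ^ β₂))
  set α := min (min β₁ β₁⁻¹) (min β₂ β₂⁻¹)
  have hα : 0 < α := by positivity
  refine ⟨K, le_max_left _ _, α, hα, (min_le_left _ _).trans (min_inv_le_one β₁), ?_⟩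
  intro u v hu hv hv₀ p q t ht huq hle
  rcases le_total p q with hpq | hqp
  · calc v q ≤ M' * t ^ β₁ * v p := hu.le_rpow_mul_of_le hv hG hρ' hρ'₁ hM' (hv₀ p) ht huq hle hpq
      _ ≤ K * powerDistortion α t * v p := by
          gcongr
          · exact hv₀ p
          · exact (le_max_left _ _).trans (le_max_right _ _)
          · exact rpow_le_powerDistortion hα ((min_le_left _ _).trans (min_le_left _ _))
              ((min_le_left _ _).trans (min_le_right _ _)) ht
  · calc v q ≤ M ^ β₂ * t ^ β₂ * v p := hu.le_rpow_mul_of_ge hv hM hρ hρ₁ hG' (hv₀ p) ht huq hle hqp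
      _ ≤ K * powerDistortion α t * v p := by
          gcongr
          · exact hv₀ p
          · exact (le_max_right _ _).trans (le_max_right _ _)
          · exact rpow_le_powerDistortion hα ((min_le_right _ _).trans (min_le_left _ _))
              ((min_le_right _ _).trans (min_le_right _ _)) ht

section Tiles

variable (𝒳 : ℕ → Set (Set S))

/-- A tile of level `n` containing `x` (an arbitrary set if `𝒳 n` does not cover `x`). -/
noncomputable def tile (n : ℕ) (x : S) : Set S :=
  Classical.epsilon fun X => X ∈ 𝒳 n ∧ x ∈ X

def meetLevels (x y : S) : Set ℕ :=
  {n | (tile 𝒳 n x ∩ tile 𝒳 n y).Nonempty}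

/-- `sSup` gives the junk value `0` when the levels are unbounded, e.g. for `x = y`. -/
noncomputable def meetLevel (x y : S) : ℕ :=
  sSup (meetLevels 𝒳 x y)

variable {𝒳}

lemma tile_mem_and_mem_tile {n : ℕ} (hcov : ⋃₀ 𝒳 n = univ) (x : S) :
    tile 𝒳 n x ∈ 𝒳 n ∧ x ∈ tile 𝒳 n x := by
  have hx : x ∈ ⋃₀ 𝒳 n := hcov ▸ mem_univ x
  exact Classical.epsilon_spec (p := fun X => X ∈ 𝒳 n ∧ x ∈ X) hx

lemma tile_zero (h₀ : 𝒳 0 = {univ}) (x : S) : tile 𝒳 0 x = univ := by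
  have := (tile_mem_and_mem_tile (𝒳 := 𝒳) (n := 0) (by rw [h₀, sUnion_singleton]) x).1
  rwa [h₀, mem_singleton_iff] at this

lemma meetLevel_mem (h₀ : 𝒳 0 = {univ}) {x y : S} (hbdd : BddAbove (meetLevels 𝒳 x y)) :
    meetLevel 𝒳 x y ∈ meetLevels 𝒳 x y :=
  Nat.sSup_mem ⟨0, x, by simp [tile_zero h₀]⟩ hbdd

lemma meetLevel_succ_notMem {x y : S} (hbdd : BddAbove (meetLevels 𝒳 x y)) :
    meetLevel 𝒳 x y + 1 ∉ meetLevels 𝒳 x y := fun h =>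
  (le_csSup hbdd h).not_gt (Nat.lt_succ_self _)

end Tiles

namespace IsQVAWith

variable [m : MetricSpace S] {𝒳 : ℕ → Set (Set S)}

theorem exists_hasGeometricBounds (h : IsQVAWith m 𝒳) :
    ∃ M ρ G, 0 < M ∧ 0 < ρ ∧ ρ < 1 ∧ 1 < G ∧
      ∀ x, HasGeometricBounds M ρ G fun n => mdiam m (tile 𝒳 n x) := by
  obtain ⟨-, hcov, -, -, -, ⟨C, hC, hcons⟩, ⟨k₀, hk₀, lam, hlam, hlam₁, hdecay⟩⟩ := h
  have htile := fun n x => tile_mem_and_mem_tile (𝒳 := 𝒳) (hcov n) x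
  -- the growth constant is raised to `C + 1 > 1` so that the exponents `logb` are positive
  have hweaken {a b : ℝ} (hb : 0 ≤ b) (hab : a ≤ C * b) : a ≤ (C + 1) * b := by nlinarith
  refine ⟨(C + 1) ^ k₀ / lam, lam ^ (k₀⁻¹ : ℝ), C + 1, by positivity, by positivity,
    Real.rpow_lt_one hlam.le hlam₁ (by positivity), by linarith, fun x => ?_⟩
  have hcons_x (n : ℕ) := hcons n _ (htile n x).1 _ (htile (n + 1) x).1
    ⟨x, (htile n x).2, (htile (n + 1) x).2⟩
  refine hasGeometricBounds_of_one_step (fun n => diam_nonneg) (by linarith) hk₀.ne' hlam hlam₁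
    (fun n => hweaken diam_nonneg (hcons_x n).2) (fun n => hweaken diam_nonneg (hcons_x n).1)
    fun n => hdecay n _ (htile n x).1 _ (htile (n + k₀) x).1 ⟨x, (htile n x).2, (htile _ x).2⟩

theorem exists_dist_le_mul_diam_tile (hb : Bornology.IsBounded (univ : Set S))
    (h : IsQVAWith m 𝒳) :
    ∃ C, 0 < C ∧ ∀ x y n, n ∈ meetLevels 𝒳 x y → dist x y ≤ C * diam (tile 𝒳 n x) := by
  obtain ⟨-, hcov, -, ⟨C, hC, hcomp⟩, -⟩ := h
  refine ⟨1 + C, by positivity, fun x y n ⟨w, hwx, hwy⟩ => ?_⟩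
  have htile := fun z => tile_mem_and_mem_tile (𝒳 := 𝒳) (hcov n) z
  have hdiam_y : diam (tile 𝒳 n y) ≤ C * diam (tile 𝒳 n x) :=
    hcomp n _ (htile y).1 _ (htile x).1 ⟨w, hwy, hwx⟩
  calc dist x y ≤ dist x w + dist w y := dist_triangle x w y
    _ ≤ diam (tile 𝒳 n x) + diam (tile 𝒳 n y) :=
        add_le_add (dist_le_diam_of_mem (hb.subset (subset_univ _)) (htile x).2 hwx)
          (dist_le_diam_of_mem (hb.subset (subset_univ _)) hwy (htile y).2)
    _ ≤ (1 + C) * diam (tile 𝒳 n x) := by linarith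

theorem bddAbove_meetLevels (hb : Bornology.IsBounded (univ : Set S)) (h : IsQVAWith m 𝒳)
    {x y : S} (hxy : x ≠ y) : BddAbove (meetLevels 𝒳 x y) := by
  obtain ⟨C, hC, hdist⟩ := h.exists_dist_le_mul_diam_tile hb
  obtain ⟨M, ρ, G, hM, hρ, hρ₁, -, hgeo⟩ := h.exists_hasGeometricBounds
  have hlim : Tendsto (fun n => C * M * diam (univ : Set S) * ρ ^ n) atTop (𝓝 0) := by
    simpa using (tendsto_pow_atTop_nhds_zero_of_lt_one hρ.le hρ₁).const_mul
      (C * M * diam (univ : Set S))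
  obtain ⟨N, hN⟩ := eventually_atTop.1 (hlim.eventually_lt_const (dist_pos.2 hxy))
  refine ⟨N, fun n hn => ?_⟩
  by_contra! hNn
  refine (hN n hNn.le).not_ge ?_
  have hdecay : diam (tile 𝒳 n x) ≤ M * ρ ^ n * diam (tile 𝒳 0 x) := by
    have h := (hgeo x 0 n).1
    rw [zero_add] at h
    exact h
  calc dist x y ≤ C * diam (tile 𝒳 n x) := hdist x y n hn
    _ ≤ C * (M * ρ ^ n * diam (univ : Set S)) := by
        gcongr
        exact hdecay.trans (by gcongr; exact diam_mono (subset_univ _) hb)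
    _ = C * M * diam (univ : Set S) * ρ ^ n := by ring

theorem exists_mul_diam_tile_meetLevel_le (h : IsQVAWith m 𝒳) :
    ∃ c, 0 < c ∧ ∀ x y, BddAbove (meetLevels 𝒳 x y) →
      c * diam (tile 𝒳 (meetLevel 𝒳 x y) x) ≤ dist x y := by
  obtain ⟨-, hcov, -, -, ⟨c, hc, hsep⟩, ⟨C, hC, hcons⟩, -⟩ := h
  refine ⟨c / C, by positivity, fun x y hbdd => ?_⟩
  set N := meetLevel 𝒳 x y
  have htile := fun n z => tile_mem_and_mem_tile (𝒳 := 𝒳) (hcov n) z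
  have hdisj : tile 𝒳 (N + 1) x ∩ tile 𝒳 (N + 1) y = ∅ :=
    not_nonempty_iff_eq_empty.1 (meetLevel_succ_notMem hbdd)
  have hcons_x : diam (tile 𝒳 N x) ≤ C * diam (tile 𝒳 (N + 1) x) :=
    (hcons N _ (htile N x).1 _ (htile (N + 1) x).1 ⟨x, (htile N x).2, (htile (N + 1) x).2⟩).1
  calc c / C * diam (tile 𝒳 N x) ≤ c / C * (C * diam (tile 𝒳 (N + 1) x)) := by gcongr
    _ = c * diam (tile 𝒳 (N + 1) x) := by field_simp
    _ ≤ dist x y :=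
        hsep (N + 1) _ (htile _ x).1 _ (htile _ y).1 hdisj x (htile _ x).2 y (htile _ y).2

theorem exists_dist_comparable (hb : Bornology.IsBounded (univ : Set S)) (h : IsQVAWith m 𝒳) :
    ∃ c C, 0 < c ∧ 0 < C ∧ ∀ x y, x ≠ y →
      c * mdiam m (tile 𝒳 (meetLevel 𝒳 x y) x) ≤ mdist m x y ∧
        mdist m x y ≤ C * mdiam m (tile 𝒳 (meetLevel 𝒳 x y) x) := by
  obtain ⟨c, hc, hlower⟩ := h.exists_mul_diam_tile_meetLevel_le
  obtain ⟨C, hC, hupper⟩ := h.exists_dist_le_mul_diam_tile hb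
  refine ⟨c, C, hc, hC, fun x y hxy => ?_⟩
  have hbdd := h.bddAbove_meetLevels hb hxy
  exact ⟨hlower x y hbdd, hupper x y _ (meetLevel_mem h.2.2.1 hbdd)⟩

theorem exists_diam_tile_le_of_mdist_le (hb : Bornology.IsBounded (univ : Set S))
    (h : IsQVAWith m 𝒳) :
    ∃ C, 0 < C ∧ ∀ (x y z : S) (t : ℝ), x ≠ y → x ≠ z → 0 ≤ t → mdist m x y ≤ t * mdist m x z →
      0 < mdiam m (tile 𝒳 (meetLevel 𝒳 x y) x) ∧
        mdiam m (tile 𝒳 (meetLevel 𝒳 x y) x) ≤ C * t * mdiam m (tile 𝒳 (meetLevel 𝒳 x z) x) := by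
  obtain ⟨c, C, hc, hC, hd⟩ := h.exists_dist_comparable hb
  refine ⟨C / c, by positivity, fun x y z t hxy hxz ht hxyz => ⟨?_, ?_⟩⟩
  · exact pos_of_mul_pos_right (((mdist_pos m).2 hxy).trans_le (hd x y hxy).2) hC.le
  · rw [div_mul_eq_mul_div, div_mul_eq_mul_div, le_div_iff₀ hc]
    calc mdiam m (tile 𝒳 (meetLevel 𝒳 x y) x) * c ≤ mdist m x y := by linarith [(hd x y hxy).1]
      _ ≤ t * mdist m x z := hxyz
      _ ≤ t * (C * mdiam m (tile 𝒳 (meetLevel 𝒳 x z) x)) := by gcongr; exact (hd x z hxz).2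
      _ = C * t * mdiam m (tile 𝒳 (meetLevel 𝒳 x z) x) := by ring

theorem exists_mdist_le_of_diam_tile_le (hb : Bornology.IsBounded (univ : Set S))
    (h : IsQVAWith m 𝒳) :
    ∃ C, 0 < C ∧ ∀ (x y z : S) (s : ℝ), x ≠ y → x ≠ z → 0 ≤ s →
      mdiam m (tile 𝒳 (meetLevel 𝒳 x y) x) ≤ s * mdiam m (tile 𝒳 (meetLevel 𝒳 x z) x) →
        mdist m x y ≤ C * s * mdist m x z := by
  obtain ⟨c, C, hc, hC, hd⟩ := h.exists_dist_comparable hb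
  refine ⟨C / c, by positivity, fun x y z s hxy hxz hs hle => ?_⟩
  have hz : mdiam m (tile 𝒳 (meetLevel 𝒳 x z) x) ≤ mdist m x z / c :=
    (le_div_iff₀ hc).2 (by linarith [(hd x z hxz).1])
  calc mdist m x y ≤ C * mdiam m (tile 𝒳 (meetLevel 𝒳 x y) x) := (hd x y hxy).2
    _ ≤ C * (s * (mdist m x z / c)) := by gcongr; exact hle.trans (by gcongr)
    _ = C / c * s * mdist m x z := by ring

end IsQVAWith

theorem stmt6 (m₁ m₂ : MetricSpace S)
    (hb₁ : mBounded m₁) (hb₂ : mBounded m₂)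
    (𝒳 : ℕ → Set (Set S))
    (h₁ : IsQVAWith m₁ 𝒳) (h₂ : IsQVAWith m₂ 𝒳) :
    -- the identity map `id : (S, m₁) → (S, m₂)` is a power quasisymmetry,
    -- i.e., a quasisymmetry with distortion function
    -- `η(t) = K * max (t ^ α) (t ^ (1/α))` for some `K ≥ 1` and `α ∈ (0,1]`
    ∃ K : ℝ, 1 ≤ K ∧ ∃ α : ℝ, 0 < α ∧ α ≤ 1 ∧
      ∀ t : ℝ, 0 < t → ∀ x y z : S,
        mdist m₁ x y ≤ t * mdist m₁ x z →
        mdist m₂ x y ≤ (K * max (t ^ α) (t ^ α⁻¹)) * mdist m₂ x z := by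
  obtain ⟨M₁, ρ₁, G₁, hM₁, hρ₁, hρ₁1, hG₁, hgeo₁⟩ := h₁.exists_hasGeometricBounds (m := m₁)
  obtain ⟨M₂, ρ₂, G₂, hM₂, hρ₂, hρ₂1, hG₂, hgeo₂⟩ := h₂.exists_hasGeometricBounds (m := m₂)
  obtain ⟨C₁, hC₁, hratio₁⟩ := h₁.exists_diam_tile_le_of_mdist_le (m := m₁) hb₁
  obtain ⟨C₂, hC₂, hratio₂⟩ := h₂.exists_mdist_le_of_diam_tile_le (m := m₂) hb₂
  obtain ⟨K, hK, α, hα, hα₁, hcomp⟩ :=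
    exists_powerDistortion_comparison hM₁ hρ₁ hρ₁1 hG₁ hM₂.le hρ₂ hρ₂1 hG₂
  set K' := C₂ * K * powerDistortion α C₁
  refine ⟨max 1 K', le_max_left _ _, α, hα, hα₁, fun t ht x y z hxyz => ?_⟩
  have hpd_t := powerDistortion_nonneg α ht.le
  have hdist_z := mdist_nonneg m₂ x z
  rcases eq_or_ne x y with rfl | hxy
  · rw [mdist_self]
    positivity
  have hxz : x ≠ z := by
    rintro rfl
    rw [mdist_self, mul_zero] at hxyz
    exact ((mdist_pos m₁).2 hxy).not_ge hxyz
  obtain ⟨hpos, hle⟩ := hratio₁ x y z t hxy hxz ht.le hxyz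
  have hv :=
    hcomp _ _ (hgeo₁ x) (hgeo₂ x) (fun _ => mdiam_nonneg _ _) _ _ _ (by positivity) hpos hle
  have hpd := powerDistortion_mul_le (α := α) hC₁.le ht.le
  have hpd_c := powerDistortion_nonneg α hC₁.le
  calc mdist m₂ x y ≤ C₂ * (K * powerDistortion α (C₁ * t)) * mdist m₂ x z :=
        hratio₂ x y z _ hxy hxz
          (mul_nonneg (by positivity) (powerDistortion_nonneg α (by positivity))) hv
    _ ≤ C₂ * (K * (powerDistortion α C₁ * powerDistortion α t)) * mdist m₂ x z := by gcongr
    _ = K' * powerDistortion α t * mdist m₂ x z := by ring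
    _ ≤ max 1 K' * powerDistortion α t * mdist m₂ x z := by gcongr; exact le_max_right _ _
end

section
/- If F : T → T' is a quasisymmetry between metric trees and T has uniformly relatively separated branch points (i.e., |p−q| ≳ min{H_T(p), H_T(q)} for all distinct branch points p,q), then T' also has uniformly relatively separated branch points. Similarly, if T has uniformly relatively dense branch points (i.e., for all distinct x,y ∈ T there is a branch point p ∈ [x,y] with H_T(p) ≳ |x−y|), then so does T'. -/
/-- `A` is a (possibly degenerate) arc in `X` with endpoints `x` and `y`. -/
def IsArc {X : Type*} [TopologicalSpace X] (A : Set X) (x y : X) : Prop :=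
  (x = y ∧ A = {x}) ∨
  (x ≠ y ∧ ∃ f : ℝ → X, ContinuousOn f (Set.Icc 0 1) ∧ Set.InjOn f (Set.Icc 0 1) ∧
    f 0 = x ∧ f 1 = y ∧ A = f '' Set.Icc 0 1)

/-- A metric tree: a compact, connected, locally connected metric space with at
least two points in which any two points are joined by a unique arc. -/
structure IsMetricTree (T : Type*) [MetricSpace T] : Prop where
  compact : CompactSpace T
  conn : ConnectedSpace T
  locConn : LocallyConnectedSpace T
  nontriv : Nontrivial T
  arcUnique : ∀ x y : T, ∃! A : Set T, IsArc A x y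

/-- The unique arc `[x,y]` joining `x` and `y` in the metric tree `T`. -/
noncomputable def treeArc {T : Type*} [MetricSpace T] (h : IsMetricTree T) (x y : T) :
    Set T :=
  (h.arcUnique x y).choose

/-- `B` is a branch of `p` in the subset `S`, i.e., the closure of a connected
component of `S \ {p}`. -/
def IsBranchIn {X : Type*} [TopologicalSpace X] (S : Set X) (p : X) (B : Set X) : Prop :=
  ∃ q ∈ S \ {p}, B = closure (connectedComponentIn (S \ {p}) q)

/-- `B` is a branch of `p` in the whole space, i.e., the closure of a connected
component of the complement of `{p}`. -/
def IsBranch {X : Type*} [TopologicalSpace X] (p : X) (B : Set X) : Prop :=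
  IsBranchIn Set.univ p B

/-- `p` is a branch point of the subset `S`: `p` has at least three distinct
branches in `S`. -/
def IsBranchPointIn {X : Type*} [TopologicalSpace X] (S : Set X) (p : X) : Prop :=
  ∃ B₁ B₂ B₃ : Set X, IsBranchIn S p B₁ ∧ IsBranchIn S p B₂ ∧ IsBranchIn S p B₃ ∧
    B₁ ≠ B₂ ∧ B₁ ≠ B₃ ∧ B₂ ≠ B₃

/-- `p` is a branch point: `p` has at least three distinct branches. -/
def IsBranchPoint {X : Type*} [TopologicalSpace X] (p : X) : Prop :=
  IsBranchPointIn Set.univ p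

/-- The height `H_S(p)` of `p` in the subset `S`: the diameter of the third
largest branch of `p` in `S`, realized as the supremum of
`min (diam B₁) (min (diam B₂) (diam B₃))` over triples of distinct branches. -/
noncomputable def heightIn {X : Type*} [MetricSpace X] (S : Set X) (p : X) : ℝ :=
  sSup {r : ℝ | ∃ B₁ B₂ B₃ : Set X, IsBranchIn S p B₁ ∧ IsBranchIn S p B₂ ∧
    IsBranchIn S p B₃ ∧ B₁ ≠ B₂ ∧ B₁ ≠ B₃ ∧ B₂ ≠ B₃ ∧
    r = min (Metric.diam B₁) (min (Metric.diam B₂) (Metric.diam B₃))}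

/-- The height `H_T(p)` of `p` in the whole tree. -/
noncomputable def treeHeight {X : Type*} [MetricSpace X] (p : X) : ℝ :=
  heightIn Set.univ p

/-- A subtree of a metric tree: a closed connected subset with at least
two points. -/
def IsSubtree {X : Type*} [TopologicalSpace X] (S : Set X) : Prop :=
  IsClosed S ∧ IsConnected S ∧ S.Nontrivial

/-- The tree `T` has uniformly relatively dense branch points. -/
def UnifRelDense {T : Type*} [MetricSpace T] (hT : IsMetricTree T) : Prop :=
  ∃ C : ℝ, 1 ≤ C ∧ ∀ x y : T, x ≠ y → ∃ p ∈ treeArc hT x y,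
    IsBranchPoint p ∧ dist x y / C ≤ treeHeight p

/-- The tree `T` has uniformly relatively separated branch points. -/
def UnifRelSep (T : Type*) [MetricSpace T] : Prop :=
  ∃ C : ℝ, 1 ≤ C ∧ ∀ p q : T, IsBranchPoint p → IsBranchPoint q → p ≠ q →
    min (treeHeight p) (treeHeight q) / C ≤ dist p q

/-!
If a homeomorphism `h` maps `closedBall p R` into `closedBall (h p) r` and `H(p) ≤ R`, then
`H(h p) ≤ 2 r`: of any three branches at `h p` one pulls back to a branch at `p` of diameter at
most `R`, which lies in `closedBall p R` because it contains `p`. For a quasisymmetry and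
`R = C d(p, q)` this transfers separation. For density, given `x ≠ y` take a diametral pair
`u, v` of the arc `[x, y]`, a branch point `p ∈ [u, v] ⊆ [x, y]` with `H(p) ≳ d(u, v)` and a
point `c` with `d(p, c) = d(u, v) / 4C < H(p) / 2`. Since `h⁻¹` maps the ball of radius
`d(h p, h c) / 2η(1)` about `h p` into `closedBall p (d(p, c))`, the same estimate for `h⁻¹`
forces `H(h p) > d(h p, h c) / 2η(1)`; and quasisymmetry gives `d(h x, h y) ≲ d(h p, h c)`
because `x` and `y` lie within `d(u, v)` of `p`.
-/

open Metric Set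

section

variable {X Y : Type*}

theorem div_max_one_le {a b K : ℝ} (hb : 0 ≤ b) (h : a ≤ K * b) : a / max 1 K ≤ b := by
  rw [div_le_iff₀ (one_pos.trans_le (le_max_left _ _))]
  exact h.trans (by rw [mul_comm]; gcongr; exact le_max_right _ _)

theorem IsGauge.pos {η : ℝ → ℝ} (hη : IsGauge η) {t : ℝ} (ht : 0 < t) : 0 < η t := by
  simpa [hη.1] using hη.2.1 self_mem_Ici (mem_Ici.2 ht.le) ht

section Metric

variable [MetricSpace X]

theorem IsCompact.exists_forall_dist_le {s : Set X} (hs : IsCompact s) (hne : s.Nonempty) :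
    ∃ u ∈ s, ∃ v ∈ s, ∀ a ∈ s, ∀ b ∈ s, dist a b ≤ dist u v := by
  obtain ⟨⟨u, v⟩, ⟨hu, hv⟩, hmax⟩ :=
    (hs.prod hs).exists_isMaxOn (hne.prod hne) continuous_dist.continuousOn
  exact ⟨u, hu, v, hv, fun a ha b hb => hmax (mk_mem_prod ha hb)⟩

theorem exists_dist_eq_of_le_dist [ConnectedSpace X] {p z : X} {r : ℝ} (hr : 0 ≤ r)
    (hrz : r ≤ dist p z) : ∃ c, dist p c = r := by
  simpa using intermediate_value_univ p z (continuous_const.dist continuous_id)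
    ⟨(dist_self p).le.trans hr, hrz⟩

end Metric

section Quasisymmetric

variable [MetricSpace X] [MetricSpace Y]

def IsQuasisymmetric (η : ℝ → ℝ) (F : X → Y) : Prop :=
  ∀ t : ℝ, 0 < t → ∀ x y z : X,
    dist x y ≤ t * dist x z → dist (F x) (F y) ≤ η t * dist (F x) (F z)

variable {η : ℝ → ℝ} {F : X → Y}

theorem IsQuasisymmetric.continuous [Nontrivial X] (hF : IsQuasisymmetric η F)
    (hη : IsGauge η) (hinj : Function.Injective F) : Continuous F := by
  refine Metric.continuous_iff.2 fun x ε hε => ?_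
  obtain ⟨z, hzx⟩ := exists_ne x
  have hFxz : 0 < dist (F x) (F z) := dist_pos.2 (hinj.ne hzx.symm)
  have hη0 : Filter.Tendsto η (nhdsWithin 0 (Ioi 0)) (nhds 0) := by
    simpa [hη.1] using ((hη.2.2.1 0 self_mem_Ici).mono Ioi_subset_Ici_self).tendsto
  obtain ⟨t, hηt, ht⟩ := ((hη0.eventually (gt_mem_nhds (div_pos hε hFxz))).and
    self_mem_nhdsWithin).exists
  refine ⟨t * dist x z, mul_pos ht (dist_pos.2 hzx.symm), fun a ha => ?_⟩
  calc dist (F a) (F x) = dist (F x) (F a) := dist_comm _ _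
    _ ≤ η t * dist (F x) (F z) := hF t ht x a z (by rw [dist_comm]; exact ha.le)
    _ < ε := (lt_div_iff₀ hFxz).1 hηt

theorem IsQuasisymmetric.mapsTo_closedBall (hF : IsQuasisymmetric η F) {t : ℝ} (ht : 0 < t)
    (p c : X) :
    MapsTo F (closedBall p (t * dist p c)) (closedBall (F p) (η t * dist (F p) (F c))) :=
  fun x hx => by
    rw [mem_closedBall, dist_comm] at hx ⊢
    exact hF t ht p x c hx

theorem IsQuasisymmetric.dist_le_of_dist_image_le (hF : IsQuasisymmetric η F) (hη : IsGauge η)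
    (hinj : Function.Injective F) {u v w : X}
    (h : dist (F u) (F v) ≤ dist (F u) (F w) / (2 * η 1)) : dist u v ≤ dist u w := by
  by_contra! hwv
  have hη1 := hη.pos one_pos
  have hw : dist (F u) (F w) ≤ η 1 * dist (F u) (F v) := hF 1 one_pos u w v (by linarith)
  have hFuw : dist (F u) (F w) = 0 := by
    rw [le_div_iff₀ (by positivity)] at h
    nlinarith [dist_nonneg (x := F u) (y := F w)]
  have huv : u = v := hinj (dist_le_zero.1 (by simpa [hFuw] using h))
  rw [huv, dist_self] at hwv
  exact hwv.not_ge dist_nonneg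

theorem IsQuasisymmetric.mapsTo_symm_closedBall (h : X ≃ₜ Y) (hh : IsQuasisymmetric η h)
    (hη : IsGauge η) (p c : X) :
    MapsTo h.symm (closedBall (h p) (dist (h p) (h c) / (2 * η 1))) (closedBall p (dist p c)) :=
  fun x hx => by
    obtain ⟨x, rfl⟩ := h.surjective x
    rw [mem_closedBall, dist_comm] at hx ⊢
    simpa using hh.dist_le_of_dist_image_le hη h.injective hx

end Quasisymmetric

section Branches

variable [TopologicalSpace X] [TopologicalSpace Y]

theorem IsBranch.image (h : X ≃ₜ Y) {p : X} {B : Set X} (hB : IsBranch p B) :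
    IsBranch (h p) (h '' B) := by
  obtain ⟨q, hq, rfl⟩ := hB
  refine ⟨h q, ⟨trivial, h.injective.ne hq.2⟩, ?_⟩
  rw [h.image_closure, h.image_connectedComponentIn hq, image_sdiff h.injective, image_univ,
    h.range_coe, image_singleton]

theorem IsBranch.preimage (h : X ≃ₜ Y) {p : X} {B : Set Y} (hB : IsBranch (h p) B) :
    IsBranch p (h ⁻¹' B) := by
  simpa [← h.image_symm] using hB.image h.symm

theorem IsBranchPoint.image (h : X ≃ₜ Y) {p : X} (hp : IsBranchPoint p) :
    IsBranchPoint (h p) := by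
  obtain ⟨B₁, B₂, B₃, h₁, h₂, h₃, h₁₂, h₁₃, h₂₃⟩ := hp
  have hinj := h.injective.image_injective
  exact ⟨h '' B₁, h '' B₂, h '' B₃, IsBranch.image h h₁, IsBranch.image h h₂,
    IsBranch.image h h₃, hinj.ne h₁₂, hinj.ne h₁₃, hinj.ne h₂₃⟩

theorem isBranchPoint_image_iff (h : X ≃ₜ Y) {p : X} : IsBranchPoint (h p) ↔ IsBranchPoint p :=
  ⟨fun hp => by simpa using hp.image h.symm, IsBranchPoint.image h⟩

/-- The components of `X \ {p}` are open and cannot be clopen, so `p` lies in each of their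
closures. -/
theorem IsBranch.mem [ConnectedSpace X] [LocallyConnectedSpace X] [T1Space X] {p : X}
    {B : Set X} (hB : IsBranch p B) : p ∈ B := by
  obtain ⟨q, hq, rfl⟩ := hB
  by_contra hp
  have hopen : IsOpen (connectedComponentIn (univ \ {p}) q) := by
    rw [← compl_eq_univ_sdiff]
    exact isOpen_compl_singleton.connectedComponentIn
  set K := connectedComponentIn (univ \ {p}) q
  have hqK : q ∈ K := mem_connectedComponentIn hq
  have hclosed : IsClosed K := by
    refine isClosed_of_closure_subset (isPreconnected_connectedComponentIn.closure
      |>.subset_connectedComponentIn (subset_closure hqK) fun z hz => ⟨trivial, ?_⟩)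
    rintro rfl
    exact hp hz
  have hpK : p ∈ K := (IsClopen.eq_univ ⟨hclosed, hopen⟩ ⟨q, hqK⟩).symm ▸ mem_univ p
  exact (connectedComponentIn_subset _ _ hpK).2 rfl

end Branches

section Height

variable [MetricSpace X] [MetricSpace Y]

theorem treeHeight_nonneg (p : X) : 0 ≤ treeHeight p :=
  Real.sSup_nonneg <| by
    rintro r ⟨B₁, B₂, B₃, -, -, -, -, -, -, rfl⟩
    exact le_min diam_nonneg (le_min diam_nonneg diam_nonneg)

theorem treeHeight_le {p : X} {M : ℝ} (hM : 0 ≤ M)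
    (h : ∀ B₁ B₂ B₃ : Set X, IsBranch p B₁ → IsBranch p B₂ → IsBranch p B₃ →
      B₁ ≠ B₂ → B₁ ≠ B₃ → B₂ ≠ B₃ → min (diam B₁) (min (diam B₂) (diam B₃)) ≤ M) :
    treeHeight p ≤ M :=
  Real.sSup_le (fun _ ⟨B₁, B₂, B₃, h₁, h₂, h₃, h₁₂, h₁₃, h₂₃, hr⟩ =>
    hr ▸ h B₁ B₂ B₃ h₁ h₂ h₃ h₁₂ h₁₃ h₂₃) hM

theorem le_treeHeight [BoundedSpace X] {p : X} {B₁ B₂ B₃ : Set X}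
    (h₁ : IsBranch p B₁) (h₂ : IsBranch p B₂) (h₃ : IsBranch p B₃)
    (h₁₂ : B₁ ≠ B₂) (h₁₃ : B₁ ≠ B₃) (h₂₃ : B₂ ≠ B₃) :
    min (diam B₁) (min (diam B₂) (diam B₃)) ≤ treeHeight p := by
  refine le_csSup ⟨diam (univ : Set X), ?_⟩ ⟨B₁, B₂, B₃, h₁, h₂, h₃, h₁₂, h₁₃, h₂₃, rfl⟩
  rintro r ⟨B₁, -, -, -, -, -, -, -, -, rfl⟩
  exact (min_le_left _ _).trans (diam_mono (subset_univ _) (Bornology.IsBounded.all _))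

theorem treeHeight_image_le_of_mapsTo [BoundedSpace X] [ConnectedSpace X] [LocallyConnectedSpace X]
    (h : X ≃ₜ Y) {p : X} {R r : ℝ} (hmaps : MapsTo h (closedBall p R) (closedBall (h p) r))
    (hH : treeHeight p ≤ R) : treeHeight (h p) ≤ 2 * r := by
  have hr : 0 ≤ r :=
    nonempty_closedBall.1 ⟨_, hmaps (mem_closedBall_self ((treeHeight_nonneg p).trans hH))⟩
  have small : ∀ B, IsBranch (h p) B → diam (h ⁻¹' B) ≤ R → diam B ≤ 2 * r := by
    intro B hB hdiam
    have hball : h ⁻¹' B ⊆ closedBall p R := fun x hx => by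
      rw [mem_closedBall, dist_comm]
      exact (dist_le_diam_of_mem (Bornology.IsBounded.all _) (hB.preimage h).mem hx).trans hdiam
    have hB : B ⊆ closedBall (h p) r := by
      simpa [h.image_preimage] using (image_mono hball).trans hmaps.image_subset
    exact (diam_mono hB isBounded_closedBall).trans (diam_closedBall hr)
  refine treeHeight_le (by positivity) fun B₁ B₂ B₃ h₁ h₂ h₃ h₁₂ h₁₃ h₂₃ => ?_
  have hpre := h.surjective.preimage_injective
  have := (le_treeHeight (h₁.preimage h) (h₂.preimage h) (h₃.preimage h) (hpre.ne h₁₂)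
    (hpre.ne h₁₃) (hpre.ne h₂₃)).trans hH
  simp only [min_le_iff] at this ⊢
  rcases this with h₁' | h₂' | h₃'
  exacts [.inl (small B₁ h₁ h₁'), .inr (.inl (small B₂ h₂ h₂')), .inr (.inr (small B₃ h₃ h₃'))]

end Height

section Arcs

theorem IsArc.image [TopologicalSpace X] [TopologicalSpace Y] {F : X → Y} (hc : Continuous F)
    (hinj : Function.Injective F) {A : Set X} {x y : X} (h : IsArc A x y) :
    IsArc (F '' A) (F x) (F y) := by
  rcases h with ⟨rfl, rfl⟩ | ⟨hxy, f, hf, hfinj, rfl, rfl, rfl⟩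
  · exact .inl ⟨rfl, image_singleton⟩
  · exact .inr ⟨hinj.ne hxy, F ∘ f, hc.comp_continuousOn hf,
      hinj.injOn.comp hfinj (mapsTo_univ _ _), rfl, rfl, (image_comp F f _).symm⟩

theorem IsArc.isCompact [TopologicalSpace X] {A : Set X} {x y : X} (h : IsArc A x y) :
    IsCompact A := by
  rcases h with ⟨-, rfl⟩ | ⟨-, f, hf, -, -, -, rfl⟩
  exacts [isCompact_singleton, isCompact_Icc.image_of_continuousOn hf]

theorem IsArc.left_mem [TopologicalSpace X] {A : Set X} {x y : X} (h : IsArc A x y) : x ∈ A := by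
  rcases h with ⟨-, rfl⟩ | ⟨-, f, -, -, rfl, -, rfl⟩
  exacts [rfl, ⟨0, left_mem_Icc.2 zero_le_one, rfl⟩]

theorem IsArc.right_mem [TopologicalSpace X] {A : Set X} {x y : X} (h : IsArc A x y) :
    y ∈ A := by
  rcases h with ⟨rfl, rfl⟩ | ⟨-, f, -, -, -, rfl, rfl⟩
  exacts [rfl, ⟨1, right_mem_Icc.2 zero_le_one, rfl⟩]

theorem IsArc.exists_subarc [TopologicalSpace X] {A : Set X} {x y u v : X} (h : IsArc A x y)
    (hu : u ∈ A) (hv : v ∈ A) : ∃ B ⊆ A, IsArc B u v := by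
  by_cases huv : u = v
  · exact ⟨{u}, singleton_subset_iff.2 hu, .inl ⟨huv, rfl⟩⟩
  rcases h with ⟨-, rfl⟩ | ⟨-, f, hf, hfinj, -, -, rfl⟩
  · exact absurd (hu.trans hv.symm) huv
  obtain ⟨s, hs, rfl⟩ := hu
  obtain ⟨t, ht, rfl⟩ := hv
  have hst : s ≠ t := fun e => huv (congrArg f e)
  have hseg : AffineMap.lineMap s t '' Icc (0 : ℝ) 1 = uIcc s t := by
    rw [← segment_eq_image_lineMap, segment_eq_uIcc]
  have hmaps : MapsTo (AffineMap.lineMap s t) (Icc (0 : ℝ) 1) (Icc 0 1) := by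
    rw [mapsTo_iff_image_subset, hseg]
    exact uIcc_subset_Icc hs ht
  refine ⟨f '' uIcc s t, image_mono (uIcc_subset_Icc hs ht), .inr ⟨huv, f ∘ AffineMap.lineMap s t,
    hf.comp (AffineMap.lineMap_continuous).continuousOn hmaps,
    hfinj.comp (AffineMap.lineMap_injective ℝ hst).injOn hmaps, by simp, by simp, ?_⟩⟩
  rw [image_comp, hseg]

variable [MetricSpace X] [MetricSpace Y]

theorem isArc_treeArc (hX : IsMetricTree X) (x y : X) : IsArc (treeArc hX x y) x y :=
  (hX.arcUnique x y).choose_spec.1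

theorem IsArc.eq_treeArc (hX : IsMetricTree X) {A : Set X} {x y : X} (h : IsArc A x y) :
    A = treeArc hX x y :=
  (hX.arcUnique x y).choose_spec.2 A h

theorem treeArc_subset_treeArc (hX : IsMetricTree X) {x y u v : X} (hu : u ∈ treeArc hX x y)
    (hv : v ∈ treeArc hX x y) : treeArc hX u v ⊆ treeArc hX x y := by
  obtain ⟨B, hBA, hB⟩ := (isArc_treeArc hX x y).exists_subarc hu hv
  exact hB.eq_treeArc hX ▸ hBA

theorem image_treeArc (hX : IsMetricTree X) (hY : IsMetricTree Y) {F : X → Y} (hc : Continuous F)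
    (hinj : Function.Injective F) (x y : X) : F '' treeArc hX x y = treeArc hY (F x) (F y) :=
  ((isArc_treeArc hX x y).image hc hinj).eq_treeArc hY

end Arcs

section Transfer

variable [MetricSpace X] [MetricSpace Y] {η : ℝ → ℝ}

theorem IsQuasisymmetric.treeHeight_image_le [BoundedSpace X] [ConnectedSpace X]
    [LocallyConnectedSpace X] {h : X ≃ₜ Y} (hh : IsQuasisymmetric η h) {C : ℝ} (hC : 0 < C)
    {p q : X} (hpq : treeHeight p ≤ C * dist p q) :
    treeHeight (h p) ≤ 2 * η C * dist (h p) (h q) := by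
  rw [mul_assoc]
  exact treeHeight_image_le_of_mapsTo h (hh.mapsTo_closedBall hC p q) hpq

theorem IsQuasisymmetric.div_lt_treeHeight_image [BoundedSpace Y] [ConnectedSpace Y]
    [LocallyConnectedSpace Y] {h : X ≃ₜ Y} (hh : IsQuasisymmetric η h) (hη : IsGauge η)
    {p c : X} (hpc : 2 * dist p c < treeHeight p) :
    dist (h p) (h c) / (2 * η 1) < treeHeight (h p) := by
  by_contra! hle
  have := treeHeight_image_le_of_mapsTo h.symm (p := h p) (r := dist p c)
    (by simpa using hh.mapsTo_symm_closedBall h hη p c) hle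
  rw [h.symm_apply_apply] at this
  linarith

theorem IsQuasisymmetric.unifRelSep [BoundedSpace X] [ConnectedSpace X]
    [LocallyConnectedSpace X] {h : X ≃ₜ Y} (hh : IsQuasisymmetric η h) :
    UnifRelSep X → UnifRelSep Y := by
  rintro ⟨C, hC, hsep⟩
  have hC0 : 0 < C := one_pos.trans_le hC
  refine ⟨max 1 (2 * η C), le_max_left _ _, h.surjective.forall₂.2 fun p q hp hq hpq => ?_⟩
  rw [isBranchPoint_image_iff] at hp hq
  have hmin := (div_le_iff₀ hC0).1 (hsep p q hp hq (h.injective.ne_iff.1 hpq))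
  refine div_max_one_le dist_nonneg ?_
  rcases min_le_iff.1 (mul_comm (dist p q) C ▸ hmin) with hp' | hq'
  · exact min_le_of_left_le (hh.treeHeight_image_le hC0 hp')
  · rw [dist_comm] at hq' ⊢
    exact min_le_of_right_le (hh.treeHeight_image_le hC0 hq')

theorem IsQuasisymmetric.unifRelDense (hX : IsMetricTree X) (hY : IsMetricTree Y) {h : X ≃ₜ Y}
    (hh : IsQuasisymmetric η h) (hη : IsGauge η) : UnifRelDense hX → UnifRelDense hY := by
  have := hX.conn
  have := hY.compact
  have := hY.conn
  have := hY.locConn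
  rintro ⟨C, hC, hdense⟩
  have hC0 : 0 < C := one_pos.trans_le hC
  refine ⟨max 1 (4 * η 1 * η (4 * C)), le_max_left _ _,
    h.surjective.forall₂.2 fun x y hxy => ?_⟩
  have hA := isArc_treeArc hX x y
  obtain ⟨u, hu, v, hv, hdiam⟩ := hA.isCompact.exists_forall_dist_le ⟨x, hA.left_mem⟩
  have huv : 0 < dist u v :=
    (dist_pos.2 (h.injective.ne_iff.1 hxy)).trans_le (hdiam x hA.left_mem y hA.right_mem)
  obtain ⟨p, hp, hbp, hHp⟩ := hdense u v (dist_pos.1 huv)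
  have hpA : p ∈ treeArc hX x y := treeArc_subset_treeArc hX hu hv hp
  set r := dist u v / (4 * C)
  obtain ⟨c, hc⟩ : ∃ c, dist p c = r := by
    have hr : r ≤ dist u v / 2 := div_le_div_of_nonneg_left huv.le two_pos (by linarith)
    by_cases hpu : r ≤ dist p u
    · exact exists_dist_eq_of_le_dist (by positivity) hpu
    · exact exists_dist_eq_of_le_dist (z := v) (by positivity)
        (by linarith [dist_triangle_left u v p])
  have hlow : dist (h p) (h c) / (2 * η 1) < treeHeight (h p) := by
    refine hh.div_lt_treeHeight_image hη ?_
    have : 2 * r = dist u v / C / 2 := by ring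
    linarith [div_pos huv hC0]
  have hup : ∀ w ∈ treeArc hX x y, dist (h p) (h w) ≤ η (4 * C) * dist (h p) (h c) := by
    refine fun w hw => hh _ (by positivity) p w c ?_
    rw [hc, mul_div_cancel₀ _ (by positivity)]
    exact hdiam p hpA w hw
  refine ⟨h p, image_treeArc hX hY h.continuous h.injective x y ▸ mem_image_of_mem h hpA,
    (isBranchPoint_image_iff h).2 hbp, div_max_one_le (treeHeight_nonneg _) ?_⟩
  have hη1 := hη.pos one_pos
  have hη4C := hη.pos (by positivity : 0 < 4 * C)
  calc dist (h x) (h y) ≤ dist (h p) (h x) + dist (h p) (h y) := dist_triangle_left _ _ _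
    _ ≤ 2 * η (4 * C) * dist (h p) (h c) := by
      linarith [hup x hA.left_mem, hup y hA.right_mem]
    _ ≤ 2 * η (4 * C) * (2 * η 1 * treeHeight (h p)) := by
      gcongr
      exact ((div_lt_iff₀' (by positivity)).1 hlow).le
    _ = 4 * η 1 * η (4 * C) * treeHeight (h p) := by ring

end Transfer

end

theorem stmt16 {T : Type*} {T' : Type*} [MetricSpace T] [MetricSpace T']
    (hT : IsMetricTree T) (hT' : IsMetricTree T') (F : T → T')
    (hbij : Function.Bijective F)
    (η : ℝ → ℝ) (hη : IsGauge η)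
    (hqs : ∀ t : ℝ, 0 < t → ∀ x y z : T,
      dist x y ≤ t * dist x z → dist (F x) (F y) ≤ η t * dist (F x) (F z)) :
    (UnifRelSep T → UnifRelSep T') ∧ (UnifRelDense hT → UnifRelDense hT') := by
  have := hT.compact
  have := hT.conn
  have := hT.locConn
  have := hT.nontriv
  have hF : IsQuasisymmetric η F := hqs
  obtain ⟨h, rfl⟩ : ∃ h : T ≃ₜ T', ⇑h = F :=
    ⟨(hF.continuous hη hbij.injective).homeoOfEquivCompactToT2 (f := .ofBijective F hbij), rfl⟩
  exact ⟨hF.unifRelSep, hF.unifRelDense hT hT' hη⟩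
end
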